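/- For integers m, n, r, i with 0 ≤ r ≤ i ≤ n ≤ m, the q-binomial identity qbinom(m+n−r−i−1, n−r−1) = q^{(n−r−1)(r−i)} · ∑_{j=r}^{i} qbinom(m+n−r−j−1, n−j−1) · qbinom(i−r, j−r) · (−1)^{j−r} · q^{C(j−r,2)} holds, where C(a,2) = a(a−1)/2. -/

import Mathlib

/-!
Write `[x, b]` for `qBinomZ q x b`. Shifting `j ↦ r + j` turns the sum into
`F(s, x, a) = qAltSum q s x a = ∑_{j ≤ s} [x-j, a-j] [s, j] (-1)^j q^{C(j,2)}` with `s = i - r`,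
`x = m + n - 2r - 1`, `a = n - r - 1`, and `F(s, x, a) = q^{as} [x-s, a]`.
This is proved by induction on `s`: the Pascal rule `[s+1, j] = [s, j] + q^{s+1-j} [s, j-1]`
gives `F(s+1, x, a) = F(s, x, a) - q^s F(s, x-1, a-1)`, and the other Pascal rule
`[y+1, a] = [y, a-1] + q^a [y, a]` closes the induction.
The inner coefficient `[s, j]` is taken as `qBinomZ`, which vanishes for `j > s` (where `qBinom`
takes a junk value), so the first Pascal rule needs no boundary cases.
-/

open Finset

noncomputable section
open scoped Classical

variable {K : Type*} [Field K]

/-- The `q`-integer `[x] = (1 - q^x)/(1 - q)` for an integer `x`. -/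
def qInt (q : K) (x : ℤ) : K := (1 - q ^ x) / (1 - q)

/-- The falling `q`-factorial `[x]_j = [x][x-1]⋯[x-j+1]`. -/
def qFall (q : K) (x : ℤ) (j : ℕ) : K := ∏ t ∈ Finset.range j, qInt q (x - t)

/-- The `q`-factorial `[n]! = [n]_n`. -/
def qFact (q : K) (n : ℕ) : K := qFall q (n : ℤ) n

/-- The Gaussian (`q`-)binomial coefficient `[a]!/([b]! [a-b]!)`. -/
def qBinom (q : K) (a b : ℕ) : K := qFact q a / (qFact q b * qFact q (a - b))

/-- The cells of the Ferrers board of `lam` (1-indexed rows `1,…,ℓ`):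
cell `(i,j)` with `1 ≤ i ≤ ℓ` and `1 ≤ j ≤ lam i`. -/
def board (lam : ℕ → ℕ) (ℓ : ℕ) : Finset (ℕ × ℕ) :=
  ((Finset.Icc 1 ℓ) ×ˢ (Finset.Icc 1 ((Finset.Icc 1 ℓ).sup lam))).filter
    (fun c => c.2 ≤ lam c.1)

/-- Placements of `k` non-attacking rooks on the Ferrers board of `lam`. -/
def placements (lam : ℕ → ℕ) (ℓ k : ℕ) : Finset (Finset (ℕ × ℕ)) :=
  (board lam ℓ).powerset.filter
    (fun p => p.card = k ∧ ∀ a ∈ p, ∀ b ∈ p, a ≠ b → a.1 ≠ b.1 ∧ a.2 ≠ b.2)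

/-- The Garsia–Remmel inversion statistic of a rook placement `p`: the number of
cells of the board that are not occupied by a rook and not directly west
(same row, with a rook strictly to the east) or north (same column, with a rook
strictly to the south) of a rook. -/
def rInv (lam : ℕ → ℕ) (ℓ : ℕ) (p : Finset (ℕ × ℕ)) : ℕ :=
  ((board lam ℓ).filter (fun c => c ∉ p ∧
      (∀ r ∈ p, r.1 = c.1 → r.2 < c.2) ∧
      (∀ r ∈ p, r.2 = c.2 → r.1 < c.1))).card

/-- The Garsia–Remmel `q`-rook number `R_k(λ) = ∑_p q^{inv(p)}`. -/
def qRook (q : K) (lam : ℕ → ℕ) (ℓ k : ℕ) : K :=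
  ∑ p ∈ placements lam ℓ k, q ^ rInv lam ℓ p

/-- The size `|λ| = λ_1 + ⋯ + λ_ℓ`. -/
def pSize (lam : ℕ → ℕ) (ℓ : ℕ) : ℕ := ∑ i ∈ Finset.Icc 1 ℓ, lam i

/-- The `q`-hit numbers `H_k^{m,n}(λ)` of `λ ⊆ n×m`, defined from the `q`-rook
numbers by the change of basis
`H_k^{m,n}(λ) = (q^{C(k,2)-|λ|}/[m-n]!) ∑_{i=k}^{n} R_i(λ) [m-i]! qbinom(i,k) (-1)^{i+k} q^{mi-C(i,2)}`. -/
def qHit (q : K) (m n : ℕ) (lam : ℕ → ℕ) (ℓ k : ℕ) : K :=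
  (q ^ ((k.choose 2 : ℤ) - (pSize lam ℓ : ℤ)) / qFact q (m - n)) *
    ∑ i ∈ Finset.Icc k n, qRook q lam ℓ i * qFact q (m - i) * qBinom q i k *
      (-1 : K) ^ (i + k) * q ^ ((m : ℤ) * (i : ℤ) - (i.choose 2 : ℤ))

/-- `lam : ℕ → ℕ` is a partition with exactly `ℓ` (positive) parts `lam 1 ≥ ⋯ ≥ lam ℓ ≥ 1`. -/
def IsPartition (lam : ℕ → ℕ) (ℓ : ℕ) : Prop :=
  (∀ i j, 1 ≤ i → i ≤ j → lam j ≤ lam i) ∧ (∀ i, ℓ < i → lam i = 0) ∧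
    (∀ i, 1 ≤ i → i ≤ ℓ → 1 ≤ lam i)

/-- `lam` is a partition with `ℓ` parts contained in an `n × m` board. -/
def IsPartitionIn (lam : ℕ → ℕ) (ℓ n m : ℕ) : Prop :=
  IsPartition lam ℓ ∧ ℓ ≤ n ∧ lam 1 ≤ m

/-- The rectangular partition `a^b` (`b` parts equal to `a`). -/
def rect (a b : ℕ) : ℕ → ℕ := fun i => if 1 ≤ i ∧ i ≤ b then a else 0

/-- The partition obtained from `lam` by deleting its `j`-th column. -/
def delCol (lam : ℕ → ℕ) (j : ℕ) : ℕ → ℕ :=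
  fun r => if j ≤ lam r then lam r - 1 else lam r

/-- The partition obtained from `lam` by deleting its `i`-th row. -/
def delRow (lam : ℕ → ℕ) (i : ℕ) : ℕ → ℕ :=
  fun r => if r < i then lam r else lam (r + 1)

/-- The `j`-th column length `λ'_j` of `lam` (with `ℓ` rows). -/
def conjP (lam : ℕ → ℕ) (ℓ j : ℕ) : ℕ :=
  ((Finset.Icc 1 ℓ).filter (fun r => j ≤ lam r)).card

/-- The Gaussian binomial coefficient with integer arguments, zero for a
negative lower argument. -/
def qBinomZ (q : K) (a b : ℤ) : K :=
  if 0 ≤ b then qFall q a b.toNat / qFact q b.toNat else 0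

variable {q : K}

lemma qInt_add (hq0 : q ≠ 0) (B Y : ℤ) : qInt q (B + Y) = qInt q B + q ^ B * qInt q Y := by
  simp only [qInt, zpow_add₀ hq0]
  ring

lemma qFall_succ (x : ℤ) (b : ℕ) : qFall q x (b + 1) = qFall q x b * qInt q (x - b) :=
  prod_range_succ _ _

lemma qFall_succ' (x : ℤ) (b : ℕ) : qFall q (x + 1) (b + 1) = qInt q (x + 1) * qFall q x b := by
  rw [qFall, prod_range_succ']
  simp only [Nat.cast_add, Nat.cast_one, Nat.cast_zero, sub_zero, qFall]
  rw [mul_comm]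
  congr 1
  exact prod_congr rfl fun t _ => by ring_nf

lemma qFall_natCast_eq_zero {s j : ℕ} (h : s < j) : qFall q s j = 0 :=
  prod_eq_zero (mem_range.mpr h) (by simp [qInt])

lemma qFact_succ (n : ℕ) : qFact q (n + 1) = qInt q (n + 1) * qFact q n := by
  rw [qFact, Nat.cast_succ, qFall_succ', qFact]

lemma qFact_eq_qFall_mul {a b : ℕ} (h : b ≤ a) : qFact q a = qFall q a b * qFact q (a - b) := by
  obtain ⟨c, rfl⟩ := Nat.exists_eq_add_of_le h
  simp only [qFact, qFall, Nat.add_sub_cancel_left, prod_range_add]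
  congr 1
  exact prod_congr rfl fun t _ => by push_cast; ring_nf

lemma qBinomZ_natCast (x : ℤ) (k : ℕ) : qBinomZ q x k = qFall q x k / qFact q k := by
  simp [qBinomZ]

lemma qBinomZ_of_neg (x : ℤ) {b : ℤ} (hb : b < 0) : qBinomZ q x b = 0 := by
  simp [qBinomZ, not_le.mpr hb]

lemma qBinomZ_natCast_of_lt {s j : ℕ} (h : s < j) : qBinomZ q s j = 0 := by
  rw [qBinomZ_natCast, qFall_natCast_eq_zero h, zero_div]

def qAltSum (q : K) (s : ℕ) (x a : ℤ) : K :=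
  ∑ j ∈ range (s + 1), qBinomZ q (x - j) (a - j) * qBinomZ q s j * (-1) ^ j * q ^ j.choose 2

section NotRootOfUnity

variable (hq1 : ∀ j : ℕ, 0 < j → q ^ j ≠ 1)
include hq1

lemma qInt_ne_zero {x : ℤ} (hx : 0 < x) : qInt q x ≠ 0 := by
  lift x to ℕ using hx.le
  have hq : q ≠ 1 := by simpa using hq1 1 one_pos
  refine div_ne_zero ?_ (sub_ne_zero.mpr hq.symm)
  rw [zpow_natCast, sub_ne_zero]
  exact (hq1 x (by exact_mod_cast hx)).symm

lemma qFact_ne_zero (n : ℕ) : qFact q n ≠ 0 := by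
  unfold qFact qFall
  exact prod_ne_zero_iff.mpr fun t ht => qInt_ne_zero hq1 (by rw [mem_range] at ht; omega)

lemma qBinom_eq_qBinomZ {a b : ℕ} (h : b ≤ a) :
    qBinom q a b = qBinomZ q a b := by
  rw [qBinom, qBinomZ_natCast, qFact_eq_qFall_mul h, mul_div_mul_right _ _ (qFact_ne_zero hq1 _)]

lemma qInt_mul_qBinomZ_succ_succ (x : ℤ) (k : ℕ) :
    qInt q (k + 1) * qBinomZ q (x + 1) (k + 1) = qInt q (x + 1) * qBinomZ q x k := by
  rw [← Nat.cast_succ, qBinomZ_natCast, qBinomZ_natCast, qFall_succ', qFact_succ]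
  field_simp [qInt_ne_zero hq1 (by omega : (0 : ℤ) < k + 1), qFact_ne_zero hq1 k]
  push_cast
  ring

lemma qInt_mul_qBinomZ_succ (x : ℤ) (k : ℕ) :
    qInt q (k + 1) * qBinomZ q x (k + 1) = qInt q (x - k) * qBinomZ q x k := by
  rw [← Nat.cast_succ, qBinomZ_natCast, qBinomZ_natCast, qFall_succ, qFact_succ]
  field_simp [qInt_ne_zero hq1 (by omega : (0 : ℤ) < k + 1), qFact_ne_zero hq1 k]
  push_cast
  ring

variable (hq0 : q ≠ 0)
include hq0

lemma qBinomZ_succ_left (x b : ℤ) :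
    qBinomZ q (x + 1) b = qBinomZ q x (b - 1) + q ^ b * qBinomZ q x b := by
  rcases b with ((_ | k) | k)
  · simp [qBinomZ, qFall]
  · rw [Int.ofNat_eq_natCast, Nat.cast_succ]
    have hsplit : qInt q (x + 1) = qInt q (k + 1) + q ^ ((k : ℤ) + 1) * qInt q (x - k) := by
      rw [← qInt_add hq0]; ring_nf
    apply mul_left_cancel₀ (qInt_ne_zero hq1 (by omega : (0 : ℤ) < k + 1))
    rw [add_sub_cancel_right]
    linear_combination qInt_mul_qBinomZ_succ_succ hq1 x k
      - q ^ ((k : ℤ) + 1) * qInt_mul_qBinomZ_succ hq1 x k + qBinomZ q x k * hsplit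
  · simp [qBinomZ_of_neg, Int.negSucc_lt_zero, Int.negSucc_sub_one]

lemma qBinomZ_succ_left' (x b : ℤ) :
    qBinomZ q (x + 1) b = qBinomZ q x b + q ^ (x + 1 - b) * qBinomZ q x (b - 1) := by
  rcases b with ((_ | k) | k)
  · simp [qBinomZ, qFall]
  · rw [Int.ofNat_eq_natCast, Nat.cast_succ]
    have hsplit : qInt q (x + 1) = qInt q (x - k) + q ^ (x - k) * qInt q (k + 1) := by
      rw [← qInt_add hq0]; ring_nf
    apply mul_left_cancel₀ (qInt_ne_zero hq1 (by omega : (0 : ℤ) < k + 1))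
    rw [add_sub_cancel_right, show x + 1 - (k + 1) = x - k by ring]
    linear_combination qInt_mul_qBinomZ_succ_succ hq1 x k
      - qInt_mul_qBinomZ_succ hq1 x k + qBinomZ q x k * hsplit
  · simp [qBinomZ_of_neg, Int.negSucc_lt_zero, Int.negSucc_sub_one]

lemma qAltSum_succ (s : ℕ) (x a : ℤ) :
    qAltSum q (s + 1) x a = qAltSum q s x a - q ^ s * qAltSum q s (x - 1) (a - 1) := by
  have hpascal (j : ℕ) : qBinomZ q ((s + 1 : ℕ) : ℤ) j =
      qBinomZ q s j + q ^ ((s : ℤ) + 1 - j) * qBinomZ q s ((j : ℤ) - 1) := by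
    push_cast
    exact qBinomZ_succ_left' hq1 hq0 s j
  have hfirst : ∑ j ∈ range (s + 2), qBinomZ q (x - j) (a - j) * qBinomZ q s j * (-1) ^ j *
      q ^ j.choose 2 = qAltSum q s x a := by
    rw [sum_range_succ, qBinomZ_natCast_of_lt (Nat.lt_succ_self s), mul_zero, zero_mul, zero_mul,
      add_zero, qAltSum]
  have hsecond : ∑ j ∈ range (s + 2), qBinomZ q (x - j) (a - j) *
      (q ^ ((s : ℤ) + 1 - j) * qBinomZ q s ((j : ℤ) - 1)) * (-1) ^ j * q ^ j.choose 2 =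
      -(q ^ s * qAltSum q s (x - 1) (a - 1)) := by
    rw [sum_range_succ', Nat.cast_zero, zero_sub, qBinomZ_of_neg _ neg_one_lt_zero, mul_zero,
      mul_zero, zero_mul, zero_mul, add_zero, qAltSum, mul_sum, ← sum_neg_distrib]
    refine sum_congr rfl fun j _ => ?_
    have hpow : q ^ ((s : ℤ) + 1 - (j + 1 : ℕ)) * q ^ (j + 1).choose 2 =
        q ^ s * q ^ j.choose 2 := by
      rw [Nat.choose_succ_succ', Nat.choose_one_right, ← zpow_natCast, ← zpow_natCast,
        ← zpow_natCast, ← zpow_add₀ hq0, ← zpow_add₀ hq0]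
      push_cast
      ring_nf
    rw [show x - (j + 1 : ℕ) = x - 1 - j by push_cast; ring,
      show a - (j + 1 : ℕ) = a - 1 - j by push_cast; ring,
      show ((j + 1 : ℕ) : ℤ) - 1 = j by push_cast; ring]
    linear_combination (-(qBinomZ q (x - 1 - j) (a - 1 - j) * qBinomZ q s j * (-1) ^ j)) * hpow
  rw [qAltSum]
  simp only [hpascal, mul_add, add_mul, sum_add_distrib]
  rw [hfirst, hsecond, ← sub_eq_add_neg]

lemma qAltSum_eq (s : ℕ) (x a : ℤ) : qAltSum q s x a = q ^ (a * s) * qBinomZ q (x - s) a := by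
  induction s generalizing x a with
  | zero => simp [qAltSum, qBinomZ, qFall, qFact]
  | succ s ih =>
    have hpascal := qBinomZ_succ_left hq1 hq0 (x - 1 - s) a
    have hpow₁ : q ^ (a * s) * q ^ a = q ^ (a * (s + 1 : ℕ)) := by
      rw [← zpow_add₀ hq0]; push_cast; ring_nf
    have hpow₂ : q ^ s * q ^ ((a - 1) * s) = q ^ (a * s) := by
      rw [← zpow_natCast, ← zpow_add₀ hq0]; ring_nf
    rw [qAltSum_succ hq1 hq0, ih, ih, show x - (s + 1 : ℕ) = x - 1 - s by push_cast; ring,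
      show x - s = x - 1 - s + 1 by ring, hpascal]
    linear_combination qBinomZ q (x - 1 - s) a * hpow₁ - qBinomZ q (x - 1 - s) (a - 1) * hpow₂

end NotRootOfUnity

theorem stmt19_general (q : K) (hq0 : q ≠ 0) (hq1 : ∀ j : ℕ, 0 < j → q ^ j ≠ 1)
    (m n r i : ℕ) (hr : r ≤ i) :
    qBinomZ q ((m : ℤ) + n - r - i - 1) ((n : ℤ) - r - 1) =
      q ^ (((n : ℤ) - r - 1) * ((r : ℤ) - i)) *
        ∑ j ∈ Finset.Icc r i,
          qBinomZ q ((m : ℤ) + n - r - j - 1) ((n : ℤ) - j - 1) *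
            qBinom q (i - r) (j - r) * (-1 : K) ^ (j - r) * q ^ ((j - r).choose 2) := by
  have hsum : ∑ j ∈ Icc r i, qBinomZ q ((m : ℤ) + n - r - j - 1) ((n : ℤ) - j - 1) *
      qBinom q (i - r) (j - r) * (-1 : K) ^ (j - r) * q ^ ((j - r).choose 2) =
      qAltSum q (i - r) (m + n - 2 * r - 1) (n - r - 1) := by
    rw [← Ico_add_one_right_eq_Icc, sum_Ico_eq_sum_range, qAltSum,
      show i + 1 - r = i - r + 1 by omega]
    refine sum_congr rfl fun j hj => ?_
    rw [Nat.add_sub_cancel_left, qBinom_eq_qBinomZ hq1 (by rw [mem_range] at hj; omega),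
      show (m : ℤ) + n - r - (r + j : ℕ) - 1 = m + n - 2 * r - 1 - j by push_cast; ring,
      show (n : ℤ) - (r + j : ℕ) - 1 = n - r - 1 - j by push_cast; ring]
  rw [hsum, qAltSum_eq hq1 hq0, ← mul_assoc, ← zpow_add₀ hq0, Nat.cast_sub hr,
    show ((n : ℤ) - r - 1) * (r - i) + (n - r - 1) * (i - r) = 0 by ring, zpow_zero, one_mul]
  congr 1
  ring

/-- The `q`-binomial identity
`qbinom(m+n-r-i-1, n-r-1) = q^{(n-r-1)(r-i)} ∑_{j=r}^{i}
  qbinom(m+n-r-j-1, n-j-1) qbinom(i-r, j-r) (-1)^{j-r} q^{C(j-r,2)}`. -/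
theorem stmt19 (q : K) (hq0 : q ≠ 0) (hq1 : ∀ j : ℕ, 0 < j → q ^ j ≠ 1)
    (m n r i : ℕ) (hr : r ≤ i) (hi : i ≤ n) (hn : n ≤ m) :
    qBinomZ q ((m : ℤ) + n - r - i - 1) ((n : ℤ) - r - 1) =
      q ^ (((n : ℤ) - r - 1) * ((r : ℤ) - i)) *
        ∑ j ∈ Finset.Icc r i,
          qBinomZ q ((m : ℤ) + n - r - j - 1) ((n : ℤ) - j - 1) *
            qBinom q (i - r) (j - r) * (-1 : K) ^ (j - r) * q ^ ((j - r).choose 2) :=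
  stmt19_general q hq0 hq1 m n r i hr
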